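/- arXiv:1110.1745 — 2 statements merged into one kernel-verified Lean document; each statement's English description precedes it below -/
import Mathlib

section
/- Fix integers n ≥ 1 and k ≥ 2. The sequence a_j = |S_j| (number of multisets of size at most k with parts at most n, equivalently the coefficients of the Gaussian binomial coefficient binom(n+k, k)_q) is unimodal: a_{j−1} ≤ a_j for all j ≤ kn/2. -/
open Finset

namespace Stmt7Aux

noncomputable section
section
variable (n k : ℕ)
abbrev W := (Fin k → ℕ) → ℚ
def dcoef (i : ℕ) : ℚ := (i : ℚ) * ((n : ℚ) + 1 - (i : ℚ))
def ucoef (i : ℕ) : ℚ := if 1 ≤ i ∧ i ≤ n then 1 else 0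
variable {k} in
def lo (x : Fin k → ℕ) (t : Fin k) : Fin k → ℕ := Function.update x t (x t - 1)
variable {k} in
def hi (x : Fin k → ℕ) (t : Fin k) : Fin k → ℕ := Function.update x t (x t + 1)
def U : W k →ₗ[ℚ] W k where
  toFun f x := ∑ t : Fin k, ucoef n (x t) * f (lo x t)
  map_add' f g := by funext x; simp [mul_add, Finset.sum_add_distrib]
  map_smul' c f := by funext x; simp [Finset.mul_sum, mul_left_comm]
def D : W k →ₗ[ℚ] W k where
  toFun f x := ∑ t : Fin k, dcoef n (x t + 1) * f (hi x t)
  map_add' f g := by funext x; simp [mul_add, Finset.sum_add_distrib]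
  map_smul' c f := by funext x; simp [Finset.mul_sum, mul_left_comm]
variable {n k}
lemma U_apply (f : W k) (x : Fin k → ℕ) :
    U n k f x = ∑ t : Fin k, ucoef n (x t) * f (lo x t) := rfl
lemma D_apply (f : W k) (x : Fin k → ℕ) :
    D n k f x = ∑ t : Fin k, dcoef n (x t + 1) * f (hi x t) := rfl
lemma diag_identity (i : ℕ) (h : i ≤ n) :
    dcoef n (i + 1) * ucoef n (i + 1) - ucoef n i * dcoef n i = (n : ℚ) - 2 * i := by
  unfold dcoef ucoef
  rcases Nat.lt_or_ge i n with h1 | h1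
  · rw [if_pos ⟨by omega, by omega⟩]
    rcases Nat.eq_zero_or_pos i with rfl | h2
    · norm_num
    · rw [if_pos ⟨h2, h⟩]; push_cast; ring
  · have hin : i = n := le_antisymm h h1
    subst hin
    rw [if_neg (by omega)]
    rcases Nat.eq_zero_or_pos i with h0 | h2
    · subst h0; norm_num
    · rw [if_pos ⟨h2, le_refl i⟩]; push_cast; ring

lemma comm_pointwise (f : W k) (x : Fin k → ℕ) (hx : ∀ t, x t ≤ n) :
    D n k (U n k f) x - U n k (D n k f) x
      = ((k * n : ℕ) - 2 * ∑ t, (x t : ℚ)) * f x := by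
  have h1 : D n k (U n k f) x
      = ∑ t, ∑ s, dcoef n (x t + 1) * (ucoef n (hi x t s) * f (lo (hi x t) s)) := by
    simp only [D_apply, U_apply, Finset.mul_sum]
  have h2 : U n k (D n k f) x
      = ∑ t, ∑ s, ucoef n (x s) * (dcoef n (lo x s t + 1) * f (hi (lo x s) t)) := by
    simp only [D_apply, U_apply, Finset.mul_sum]
    rw [Finset.sum_comm]
  rw [h1, h2, ← Finset.sum_sub_distrib]
  have h3 : ∀ t : Fin k,
      ((∑ s, dcoef n (x t + 1) * (ucoef n (hi x t s) * f (lo (hi x t) s)))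
        - ∑ s, ucoef n (x s) * (dcoef n (lo x s t + 1) * f (hi (lo x s) t)))
      = ((n : ℚ) - 2 * x t) * f x := by
    intro t
    rw [← Finset.sum_sub_distrib, Finset.sum_eq_single t]
    · -- diagonal term
      have e1 : hi x t t = x t + 1 := Function.update_self _ _ _
      have e2 : lo (hi x t) t = x := by
        unfold lo hi
        rw [Function.update_self, Function.update_idem]
        simp [Function.update_eq_self]
      have e3 : lo x t t = x t - 1 := Function.update_self _ _ _
      rw [e1, e2, e3]
      by_cases h0 : 1 ≤ x t
      · have e4 : hi (lo x t) t = x := by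
          unfold lo hi
          rw [Function.update_self, Function.update_idem, Nat.sub_add_cancel h0]
          simp [Function.update_eq_self]
        rw [e4, Nat.sub_add_cancel h0]
        have := diag_identity (n := n) (x t) (hx t)
        linear_combination (f x) * this
      · have hz : x t = 0 := by omega
        rw [hz]
        have hu0 : ucoef n 0 = 0 := by simp [ucoef]
        rw [hu0]
        have := diag_identity (n := n) 0 (Nat.zero_le n)
        rw [hu0] at this
        push_cast at this ⊢
        linear_combination (f x) * this
    · -- off-diagonal terms vanish
      intro s _ hst
      have e1 : hi x t s = x s := Function.update_of_ne hst _ _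
      have e2 : lo x s t = x t := Function.update_of_ne (Ne.symm hst) _ _
      have e3 : lo (hi x t) s = hi (lo x s) t := by
        unfold lo hi
        rw [Function.update_of_ne hst, Function.update_of_ne (Ne.symm hst),
          Function.update_comm hst]
      rw [e1, e2, e3]
      ring
    · simp
  rw [Finset.sum_congr rfl (fun t _ => h3 t), ← Finset.sum_mul,
    Finset.sum_sub_distrib, Finset.sum_const, Finset.card_univ, Fintype.card_fin,
    ← Finset.mul_sum]
  push_cast
  ring

def InT (j : ℕ) (x : Fin k → ℕ) : Prop := (∀ t, x t ≤ n) ∧ ∑ t, x t = j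

def Supp (j : ℕ) (f : W k) : Prop := ∀ x, ¬ InT (n := n) j x → f x = 0

lemma sum_lo (x : Fin k → ℕ) (t : Fin k) (h : 1 ≤ x t) :
    (∑ s, lo x t s) + 1 = ∑ s, x s := by
  unfold lo
  rw [Finset.sum_update_of_mem (Finset.mem_univ t),
    ← Finset.add_sum_erase _ x (Finset.mem_univ t), Finset.sdiff_singleton_eq_erase]
  omega

lemma sum_hi (x : Fin k → ℕ) (t : Fin k) :
    ∑ s, hi x t s = (∑ s, x s) + 1 := by
  unfold hi
  rw [Finset.sum_update_of_mem (Finset.mem_univ t),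
    ← Finset.add_sum_erase _ x (Finset.mem_univ t), Finset.sdiff_singleton_eq_erase]
  omega

lemma lo_apply_ne (x : Fin k → ℕ) {s t : Fin k} (h : s ≠ t) : lo x t s = x s :=
  Function.update_of_ne h _ _

lemma hi_apply_ne (x : Fin k → ℕ) {s t : Fin k} (h : s ≠ t) : hi x t s = x s :=
  Function.update_of_ne h _ _

lemma ucoef_ne_zero {i : ℕ} (h : ucoef n i ≠ 0) : 1 ≤ i ∧ i ≤ n := by
  by_contra hc; exact h (by simp [ucoef, hc])

lemma U_supp {j : ℕ} {f : W k} (hf : Supp (n := n) j f) :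
    Supp (n := n) (j + 1) (U n k f) := by
  intro x hx
  rw [U_apply]
  refine Finset.sum_eq_zero fun t _ => ?_
  by_cases hu : ucoef n (x t) = 0
  · rw [hu, zero_mul]
  · obtain ⟨h1, h2⟩ := ucoef_ne_zero hu
    rw [hf (lo x t) ?_, mul_zero]
    intro ⟨hb, hs⟩
    refine hx ⟨fun s => ?_, ?_⟩
    · rcases eq_or_ne s t with rfl | hst
      · exact h2
      · rw [← lo_apply_ne x hst]; exact hb s
    · rw [← hs, sum_lo x t h1]
lemma D_supp' {j : ℕ} {f : W k} (hf : Supp (n := n) j f) :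
    ∀ x : Fin k → ℕ, ¬ ((∀ t, x t ≤ n) ∧ (∑ t, x t) + 1 = j) → D n k f x = 0 := by
  intro x hx
  rw [D_apply]
  refine Finset.sum_eq_zero fun t _ => ?_
  rw [hf (hi x t) ?_, mul_zero]
  intro ⟨hb, hs⟩
  refine hx ⟨fun s => ?_, ?_⟩
  · rcases eq_or_ne s t with rfl | hst
    · have := hb s; unfold hi at this; rw [Function.update_self] at this; omega
    · rw [← hi_apply_ne x hst]; exact hb s
  · rw [← hs, sum_hi x t]

lemma U_box {f : W k} (hf : ∀ y : Fin k → ℕ, ¬ (∀ t, y t ≤ n) → f y = 0)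
    {x : Fin k → ℕ} (hx : ¬ ∀ t, x t ≤ n) : U n k f x = 0 := by
  push_neg at hx
  obtain ⟨r, hr⟩ := hx
  rw [U_apply]
  refine Finset.sum_eq_zero fun t _ => ?_
  by_cases hu : ucoef n (x t) = 0
  · rw [hu, zero_mul]
  · obtain ⟨h1, h2⟩ := ucoef_ne_zero hu
    have hrt : r ≠ t := by rintro rfl; omega
    rw [hf (lo x t) ?_, mul_zero]
    push_neg
    exact ⟨r, by rw [lo_apply_ne x hrt]; omega⟩

lemma D_box {f : W k} (hf : ∀ y : Fin k → ℕ, ¬ (∀ t, y t ≤ n) → f y = 0)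
    {x : Fin k → ℕ} (hx : ¬ ∀ t, x t ≤ n) : D n k f x = 0 := by
  push_neg at hx
  obtain ⟨r, hr⟩ := hx
  rw [D_apply]
  refine Finset.sum_eq_zero fun t _ => ?_
  rw [hf (hi x t) ?_, mul_zero]
  push_neg
  rcases eq_or_ne r t with rfl | hrt
  · exact ⟨r, by unfold hi; rw [Function.update_self]; omega⟩
  · exact ⟨r, by rw [hi_apply_ne x hrt]; omega⟩

lemma Supp.box {j : ℕ} {f : W k} (hf : Supp (n := n) j f) :
    ∀ y : Fin k → ℕ, ¬ (∀ t, y t ≤ n) → f y = 0 := by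
  intro y hy; exact hf y fun h => hy h.1

lemma comm_fun (j : ℕ) (f : W k) (hf : Supp (n := n) j f) :
    ∀ x, D n k (U n k f) x - U n k (D n k f) x = ((k * n : ℕ) - 2 * (j : ℚ)) * f x := by
  intro x
  by_cases hb : ∀ t, x t ≤ n
  · rw [comm_pointwise f x hb]
    by_cases hs : ∑ t, x t = j
    · rw [← hs]; push_cast; ring
    · rw [hf x fun h => hs h.2, mul_zero, mul_zero]
  · rw [hf x fun h => hb h.1, mul_zero]
    rw [D_box (U_supp hf).box hb, U_box ?_ hb, sub_zero]
    · intro y hy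
      exact D_box hf.box hy

lemma step_eq (j : ℕ) (lam : ℚ) (f : W k) (hf : Supp (n := n) j f)
    (he : D n k (U n k f) = lam • f) :
    U n k (D n k f) = (lam - (((k * n : ℕ) : ℚ) - 2 * j)) • f := by
  funext x
  have h1 := comm_fun j f hf x
  have h2 := congrFun he x
  simp only [Pi.smul_apply, smul_eq_mul] at h2 ⊢
  linear_combination h2 - h1

lemma eigen : ∀ j : ℕ, 2 * j ≤ k * n → ∀ (lam : ℚ) (f : W k), Supp (n := n) j f → f ≠ 0 →
    D n k (U n k f) = lam • f → ((k * n : ℕ) : ℚ) - 2 * j ≤ lam := by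
  intro j
  induction j with
  | zero =>
    intro hj lam f hf hne he
    have hDf : D n k f = 0 := by
      funext x
      exact D_supp' hf x (by omega)
    have hU := step_eq 0 lam f hf he
    rw [hDf, map_zero] at hU
    obtain ⟨x0, hx0⟩ := Function.ne_iff.mp hne
    have := congrFun hU.symm x0
    simp only [Pi.smul_apply, smul_eq_mul, Pi.zero_apply] at this
    rcases mul_eq_zero.mp this with h | h
    · push_cast at h ⊢; linarith
    · exact absurd h hx0
  | succ j ih =>
    intro hj lam f hf hne he
    have hU := step_eq (j + 1) lam f hf he
    by_cases hg : D n k f = 0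
    · rw [hg, map_zero] at hU
      obtain ⟨x0, hx0⟩ := Function.ne_iff.mp hne
      have := congrFun hU.symm x0
      simp only [Pi.smul_apply, smul_eq_mul, Pi.zero_apply] at this
      rcases mul_eq_zero.mp this with h | h
      · push_cast at h ⊢; linarith
      · exact absurd h hx0
    · have hgs : Supp (n := n) j (D n k f) := by
        intro x hx
        refine D_supp' hf x ?_
        rintro ⟨hb, hs⟩
        exact hx ⟨hb, by omega⟩
      have he2 : D n k (U n k (D n k f)) = (lam - (((k * n : ℕ) : ℚ) - 2 * (j + 1))) • D n k f := by
        rw [hU, map_smul]; norm_cast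
      have hmu := ih (by omega) _ (D n k f) hgs hg he2
      have hc : ((2 * (j + 1) : ℕ) : ℚ) ≤ ((k * n : ℕ) : ℚ) := Nat.cast_le.mpr hj
      push_cast at hc hmu ⊢
      linarith

lemma U_inj (j : ℕ) (hj : 2 * j < k * n) (f : W k) (hf : Supp (n := n) j f)
    (h : U n k f = 0) : f = 0 := by
  by_contra hne
  have he : D n k (U n k f) = (0 : ℚ) • f := by rw [h, map_zero, zero_smul]
  have := eigen j (le_of_lt hj) 0 f hf hne he
  have hc : ((2 * j : ℕ) : ℚ) < ((k * n : ℕ) : ℚ) := Nat.cast_lt.mpr hj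
  push_cast at hc this
  linarith

def pi' (x : Fin k → ℕ) : Multiset ℕ := (List.ofFn x : Multiset ℕ)

lemma pi'_card (x : Fin k → ℕ) : Multiset.card (pi' x) = k := by
  simp [pi']

lemma pi'_sum (x : Fin k → ℕ) : (pi' x).sum = ∑ t, x t := by
  simp [pi', Multiset.sum_coe, List.sum_ofFn]

lemma pi'_mem {v : ℕ} {x : Fin k → ℕ} : v ∈ pi' x ↔ ∃ i, x i = v := by
  simp [pi', List.mem_ofFn, Set.mem_range, eq_comm]

lemma pi'_comp_perm (x : Fin k → ℕ) (σ : Equiv.Perm (Fin k)) : pi' (x ∘ σ) = pi' x := by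
  exact Multiset.coe_eq_coe.mpr (σ.ofFn_comp_perm x)

lemma pi'_eq_perm {x y : Fin k → ℕ} (h : pi' x = pi' y) :
    ∃ σ : Equiv.Perm (Fin k), x = y ∘ σ := by
  have hp : (List.ofFn x).Perm (List.ofFn y) := Multiset.coe_eq_coe.mp h
  set σx := Tuple.sort x
  set σy := Tuple.sort y
  have hmx : Monotone (x ∘ σx) := Tuple.monotone_sort x
  have hmy : Monotone (y ∘ σy) := Tuple.monotone_sort y
  have hperm : (List.ofFn (x ∘ σx)).Perm (List.ofFn (y ∘ σy)) :=
    ((σx.ofFn_comp_perm x).trans hp).trans (σy.ofFn_comp_perm y).symm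
  have heq : List.ofFn (x ∘ σx) = List.ofFn (y ∘ σy) :=
    hperm.eq_of_sortedLE hmx.sortedLE_ofFn hmy.sortedLE_ofFn
  have hfun : x ∘ σx = y ∘ σy := List.ofFn_injective heq
  refine ⟨σx.symm.trans σy, ?_⟩
  funext i
  have := congrFun hfun (σx.symm i)
  simpa using this

lemma exists_rep (S : Multiset ℕ) (hS : Multiset.card S = k) :
    ∃ x : Fin k → ℕ, pi' x = S := by
  have hl : (S.toList : Multiset ℕ) = S := Multiset.coe_toList S
  have hlen : S.toList.length = k := by rw [Multiset.length_toList, hS]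
  subst hlen
  exact ⟨S.toList.get, by rw [pi', List.ofFn_get, hl]⟩

def SSet (n k j : ℕ) : Set (Multiset ℕ) :=
  {m : Multiset ℕ | Multiset.card m = k ∧ (∀ x ∈ m, x ≤ n) ∧ m.sum = j}

lemma pi'_mem_SSet {j : ℕ} {x : Fin k → ℕ} (h : InT (n := n) j x) : pi' x ∈ SSet n k j :=
  ⟨pi'_card x, fun v hv => by obtain ⟨i, rfl⟩ := pi'_mem.mp hv; exact h.1 i,
   by rw [pi'_sum]; exact h.2⟩

lemma InT_of_pi'_eq {j : ℕ} {x y : Fin k → ℕ} (hxy : pi' x = pi' y)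
    (h : InT (n := n) j x) : InT (n := n) j y := by
  constructor
  · intro t
    have hmem : y t ∈ pi' x := hxy ▸ pi'_mem.mpr ⟨t, rfl⟩
    obtain ⟨i, hi⟩ := pi'_mem.mp hmem
    rw [← hi]; exact h.1 i
  · have : (pi' y).sum = j := by rw [← hxy, pi'_sum]; exact h.2
    rw [pi'_sum] at this; exact this

open Classical in
def Phi (n k j : ℕ) : (↥(SSet n k j) → ℚ) →ₗ[ℚ] W k where
  toFun g x := if h : InT (n := n) j x then g ⟨pi' x, pi'_mem_SSet h⟩ else 0
  map_add' g g' := by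
    funext x
    by_cases h : InT (n := n) j x <;> simp [h]
  map_smul' c g := by
    funext x
    by_cases h : InT (n := n) j x <;> simp [h]

open Classical in
lemma Phi_apply (n k j : ℕ) (g : ↥(SSet n k j) → ℚ) (x : Fin k → ℕ) :
    Phi n k j g x = if h : InT (n := n) j x then g ⟨pi' x, pi'_mem_SSet h⟩ else 0 := rfl

lemma Phi_supp (j : ℕ) (g : ↥(SSet n k j) → ℚ) : Supp (n := n) j (Phi n k j g) := by
  intro x hx
  rw [Phi_apply, dif_neg hx]

lemma InT_of_rep {j : ℕ} {S : Multiset ℕ} (hS : S ∈ SSet n k j) {x : Fin k → ℕ}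
    (hx : pi' x = S) : InT (n := n) j x := by
  constructor
  · intro t
    exact hS.2.1 _ (hx ▸ pi'_mem.mpr ⟨t, rfl⟩)
  · rw [← pi'_sum x, hx]; exact hS.2.2

lemma Phi_inj (j : ℕ) : Function.Injective (Phi n k j) := by
  intro g g' h
  funext S
  obtain ⟨x, hx⟩ := exists_rep S.1 S.2.1
  have hInT : InT (n := n) j x := InT_of_rep S.2 hx
  have hc := congrFun h x
  rw [Phi_apply, Phi_apply, dif_pos hInT, dif_pos hInT] at hc
  have hsub : (⟨pi' x, pi'_mem_SSet hInT⟩ : ↥(SSet n k j)) = S := Subtype.ext hx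
  rw [hsub] at hc
  exact hc

lemma Phi_symm (j : ℕ) (g : ↥(SSet n k j) → ℚ) {x y : Fin k → ℕ}
    (hxy : pi' x = pi' y) : Phi n k j g x = Phi n k j g y := by
  by_cases h : InT (n := n) j x
  · have h' := InT_of_pi'_eq hxy h
    rw [Phi_apply, Phi_apply, dif_pos h, dif_pos h']
    congr 1
    exact Subtype.ext hxy
  · have h' : ¬ InT (n := n) j y := fun hy => h (InT_of_pi'_eq hxy.symm hy)
    rw [Phi_apply, Phi_apply, dif_neg h, dif_neg h']

lemma lo_comp_perm (y : Fin k → ℕ) (σ : Equiv.Perm (Fin k)) (t : Fin k) :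
    lo (y ∘ σ) t = (lo y (σ t)) ∘ σ := by
  funext s
  unfold lo
  by_cases hst : s = t
  · subst hst
    simp [Function.update_self]
  · rw [Function.update_of_ne hst]
    have : σ s ≠ σ t := fun hc => hst (σ.injective hc)
    simp [Function.comp, Function.update_of_ne this]

lemma U_symm {f : W k} (hf : ∀ x y : Fin k → ℕ, pi' x = pi' y → f x = f y)
    {x y : Fin k → ℕ} (hxy : pi' x = pi' y) : U n k f x = U n k f y := by
  obtain ⟨σ, rfl⟩ := pi'_eq_perm hxy
  rw [U_apply, U_apply]
  refine Fintype.sum_equiv σ _ _ fun t => ?_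
  have harg : f (lo (y ∘ σ) t) = f (lo y (σ t)) := by
    apply hf
    rw [lo_comp_perm, pi'_comp_perm]
  rw [harg]
  rfl

lemma mem_range_Phi {j : ℕ} {h : W k} (hsupp : Supp (n := n) j h)
    (hsym : ∀ x y : Fin k → ℕ, pi' x = pi' y → h x = h y) :
    h ∈ LinearMap.range (Phi n k j) := by
  refine ⟨fun S => h (Classical.choose (exists_rep S.1 S.2.1)), ?_⟩
  funext x
  rw [Phi_apply]
  by_cases hx : InT (n := n) j x
  · rw [dif_pos hx]
    exact hsym _ _ (Classical.choose_spec (exists_rep (pi' x) (pi'_card x)))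
  · rw [dif_neg hx]
    exact (hsupp x hx).symm

lemma SSet_finite (n k j : ℕ) : (SSet n k j).Finite := by
  apply Set.Finite.subset (Finset.finite_toSet ((k • Multiset.range (n+1)).powerset.toFinset))
  intro m hm
  simp only [Finset.coe_sort_coe, Finset.mem_coe, Multiset.mem_toFinset, Multiset.mem_powerset]
  rw [Multiset.le_iff_count]
  intro v
  rw [Multiset.count_nsmul]
  by_cases hv : v ≤ n
  · have h1 : Multiset.count v (Multiset.range (n+1)) = 1 :=
      Multiset.count_eq_one_of_mem (Multiset.nodup_range _) (Multiset.mem_range.mpr (by omega))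
    rw [h1, mul_one, ← hm.1]
    exact Multiset.count_le_card v m
  · rw [Multiset.count_eq_zero.mpr (fun hvm => hv (hm.2.1 v hvm))]
    exact Nat.zero_le _

end
end

end Stmt7Aux

open Stmt7Aux in
/-- Unimodality of the coefficients of the Gaussian binomial coefficient:
with `a j` the number of multisets of size `k` with elements in `{0,...,n}`
summing to `j`, one has `a (j−1) ≤ a j` whenever `1 ≤ j` and `2j ≤ kn`. -/
theorem stmt_7 (n k : ℕ) (hn : 1 ≤ n) (hk : 2 ≤ k)
    (a : ℕ → ℕ)
    (ha : ∀ j, a j =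
      Nat.card {m : Multiset ℕ | Multiset.card m = k ∧ (∀ x ∈ m, x ≤ n) ∧ m.sum = j}) :
    ∀ j : ℕ, 1 ≤ j → 2 * j ≤ k * n → a (j - 1) ≤ a j := by
  intro j hj1 hj2
  rw [ha, ha]
  show Nat.card ↥(SSet n k (j-1)) ≤ Nat.card ↥(SSet n k j)
  have hfin1 := SSet_finite n k (j-1)
  have hfin2 := SSet_finite n k j
  haveI := hfin1.fintype
  haveI := hfin2.fintype
  rw [Nat.card_eq_fintype_card, Nat.card_eq_fintype_card]
  set L := (U n k).comp (Phi n k (j-1)) with hL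
  have hLinj : Function.Injective L := by
    rw [injective_iff_map_eq_zero]
    intro g hg
    have h0 : Phi n k (j-1) g = 0 := by
      refine U_inj (j-1) (by omega) _ (Phi_supp (j-1) g) hg
    have h0' : Phi n k (j-1) g = Phi n k (j-1) 0 := by rw [map_zero, h0]
    exact Phi_inj (j-1) h0'
  have hrange : ∀ g, L g ∈ LinearMap.range (Phi n k j) := by
    intro g
    have hs : Supp (n := n) ((j-1)+1) (U n k (Phi n k (j-1) g)) :=
      U_supp (Phi_supp (j-1) g)
    rw [Nat.sub_add_cancel hj1] at hs
    exact mem_range_Phi hs (fun x y hxy => U_symm (fun x' y' h' => Phi_symm (j-1) g h') hxy)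
  let L' := L.codRestrict (LinearMap.range (Phi n k j)) hrange
  have hL'inj : Function.Injective L' := fun g g' h => hLinj (congrArg Subtype.val h)
  haveI : Module.Finite ℚ ↥(LinearMap.range (Phi n k j)) := Module.Finite.range _
  calc Fintype.card ↥(SSet n k (j-1))
      = Module.finrank ℚ (↥(SSet n k (j-1)) → ℚ) := (Module.finrank_pi ℚ).symm
    _ ≤ Module.finrank ℚ ↥(LinearMap.range (Phi n k j)) :=
        LinearMap.finrank_le_finrank_of_injective hL'inj
    _ = Module.finrank ℚ (↥(SSet n k j) → ℚ) := LinearMap.finrank_range_of_inj (Phi_inj j)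
    _ = Fintype.card ↥(SSet n k j) := Module.finrank_pi ℚ
end

section
/- Fix k ≥ 2. For all sufficiently large n and all integers j with n+1 ≤ j ≤ (k−1)·n, the number of multisets of size k with elements in {0,...,n} summing to j is at least n^{k−1}/((k−1)!·k!) + O(n^{k−2}); precisely, there is a constant C = C(k) such that |S_j| ≥ n^{k−1}/((k−1)!·k!) − C·n^{k−2} for all such j. -/
open Finset

/-- number of tuples in `[0,n]^k` with sum `j` -/
def cnt (n : ℕ) : ℕ → ℕ → ℕ
  | 0, j => if j = 0 then 1 else 0
  | (k+1), j => ∑ x ∈ Finset.range (n+1), if x ≤ j then cnt n k (j - x) else 0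

lemma cnt_succ (n k j : ℕ) :
    cnt n (k+1) j = ∑ x ∈ Finset.range (n+1), if x ≤ j then cnt n k (j - x) else 0 := rfl

lemma cnt_vanish (n : ℕ) : ∀ k j, k * n < j → cnt n k j = 0 := by
  intro k
  induction k with
  | zero => intro j hj; simp [cnt]; omega
  | succ k ih =>
    intro j hj
    rw [cnt_succ]
    apply Finset.sum_eq_zero
    intro x hx
    simp only [Finset.mem_range] at hx
    split
    · refine ih _ ?_
      have hm : (k+1) * n = k * n + n := by ring
      omega
    · rfl

lemma cnt_symm (n : ℕ) : ∀ k i, i ≤ k * n → cnt n k i = cnt n k (k * n - i) := by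
  intro k
  induction k with
  | zero =>
    intro i hi
    have : i = 0 := by omega
    simp [this]
  | succ k ih =>
    intro i hi
    rw [cnt_succ, cnt_succ]
    rw [← Finset.sum_range_reflect (fun x => if x ≤ (k+1) * n - i then cnt n k ((k+1) * n - i - x) else 0) (n+1)]
    simp only [Nat.add_sub_cancel]
    apply Finset.sum_congr rfl
    intro x hx
    simp only [Finset.mem_range] at hx
    by_cases h1 : x ≤ i
    · by_cases h2 : i - x ≤ k * n
      · have hm : (k+1) * n = k * n + n := by ring
        rw [if_pos h1, if_pos (by omega : n - x ≤ (k+1) * n - i)]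
        rw [ih _ h2]
        congr 1
        omega
      · have hm : (k+1) * n = k * n + n := by ring
        rw [if_pos h1, cnt_vanish n k _ (by omega), if_neg (by omega : ¬ (n - x ≤ (k+1)*n - i))]
    · have hm : (k+1) * n = k * n + n := by ring
      rw [if_neg h1, if_pos (by omega : n - x ≤ (k+1) * n - i)]
      rw [cnt_vanish n k _ (by omega : k * n < (k+1) * n - i - (n - x))]

lemma cnt_step (n k j : ℕ) :
    cnt n (k+1) (j+1) + (if n ≤ j then cnt n k (j - n) else 0)
      = cnt n (k+1) j + cnt n k (j+1) := by
  rw [cnt_succ, cnt_succ]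
  rw [Finset.sum_range_succ' (fun x => if x ≤ j + 1 then cnt n k (j + 1 - x) else 0) n]
  rw [Finset.sum_range_succ (fun x => if x ≤ j then cnt n k (j - x) else 0) n]
  have h1 : ∀ x, (if x + 1 ≤ j + 1 then cnt n k (j + 1 - (x + 1)) else 0)
      = (if x ≤ j then cnt n k (j - x) else 0) := by
    intro x
    simp [Nat.succ_sub_succ]
  simp only [h1]
  simp only [Nat.le_zero, Nat.sub_zero, if_pos (Nat.zero_le _)]
  omega

lemma cnt_mono (n : ℕ) : ∀ k i j, i ≤ j → i + j ≤ k * n → cnt n k i ≤ cnt n k j := by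
  intro k
  induction k with
  | zero => intro i j hij h; have : i = 0 ∧ j = 0 := by omega
            rw [this.1, this.2]
  | succ k ih =>
    -- single step up
    have step : ∀ t, 2 * (t + 1) ≤ (k+1) * n → cnt n (k+1) t ≤ cnt n (k+1) (t+1) := by
      intro t ht
      have hm : (k+1) * n = k * n + n := by ring
      have hs := cnt_step n k t
      have hle : (if n ≤ t then cnt n k (t - n) else 0) ≤ cnt n k (t+1) := by
        split
        · exact ih (t - n) (t + 1) (by omega) (by omega)
        · exact Nat.zero_le _
      omega
    have chain : ∀ d i, 2 * (i + d) ≤ (k+1) * n → cnt n (k+1) i ≤ cnt n (k+1) (i + d) := by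
      intro d
      induction d with
      | zero => intro i _; simp
      | succ d ihd =>
        intro i h
        calc cnt n (k+1) i ≤ cnt n (k+1) (i + d) := ihd i (by omega)
          _ ≤ cnt n (k+1) (i + d + 1) := step (i + d) (by omega)
    intro i j hij h
    by_cases hc : 2 * j ≤ (k+1) * n
    · have := chain (j - i) i (by omega)
      rwa [Nat.add_sub_cancel' hij] at this
    · have hj : j ≤ (k+1) * n := by omega
      rw [cnt_symm n (k+1) j hj]
      have := chain ((k+1) * n - j - i) i (by omega)
      rwa [show i + ((k+1) * n - j - i) = (k+1) * n - j by omega] at this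

lemma hockey (k : ℕ) : ∀ j, ∑ u ∈ Finset.range (j+1), (u + k).choose k = (j + k + 1).choose (k+1) := by
  intro j
  induction j with
  | zero => simp
  | succ j ihj =>
    rw [Finset.sum_range_succ, ihj, show j + 1 + k = j + k + 1 by ring]
    rw [Nat.choose_succ_succ (j + k + 1) k]
    simp only [Nat.succ_eq_add_one]
    omega

lemma cnt_boundary (n : ℕ) : ∀ k j, j ≤ n → cnt n (k+1) j = (j + k).choose k := by
  intro k
  induction k with
  | zero =>
    intro j hj
    rw [cnt_succ]
    have : ∀ x ∈ Finset.range (n+1), (if x ≤ j then cnt n 0 (j - x) else 0)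
        = if x = j then 1 else 0 := by
      intro x _
      by_cases h : x = j
      · simp [h, cnt]
      · by_cases h2 : x ≤ j
        · rw [if_pos h2, if_neg h]
          simp [cnt]
          omega
        · rw [if_neg h2, if_neg h]
    rw [Finset.sum_congr rfl this, Finset.sum_ite_eq' (Finset.range (n+1)) j (fun _ => 1)]
    rw [if_pos (Finset.mem_range.mpr (by omega))]
    simp
  | succ k ihk =>
    intro j hj
    rw [cnt_succ]
    have hsub : ∀ x ∈ Finset.range (j+1), (if x ≤ j then cnt n (k+1) (j - x) else 0)
        = (j - x + k).choose k := by
      intro x hx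
      simp only [Finset.mem_range] at hx
      rw [if_pos (by omega), ihk (j - x) (by omega)]
    rw [← Finset.sum_subset (Finset.range_subset_range.mpr (by omega : j + 1 ≤ n + 1))
      (by intro x _ hx; simp only [Finset.mem_range] at hx; rw [if_neg (by omega)])]
    rw [Finset.sum_congr rfl hsub]
    have hre : ∀ x ∈ Finset.range (j+1), (j - x + k).choose k
        = (fun u => (u + k).choose k) (j + 1 - 1 - x) := by
      intro x hx
      simp only [Finset.mem_range] at hx
      show _ = (j + 1 - 1 - x + k).choose k
      congr 1
    rw [Finset.sum_congr rfl hre, Finset.sum_range_reflect (fun u => (u + k).choose k) (j+1)]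
    rw [hockey k j]
    congr 1

lemma pow_le_fact_mul_choose : ∀ m n : ℕ, n ^ m ≤ m.factorial * (n + m).choose m := by
  intro m
  induction m with
  | zero => intro n; simp
  | succ m ih =>
    intro n
    have key : (n + m + 1) * (n + m).choose m = (n + m + 1).choose (m + 1) * (m + 1) := by
      have := Nat.add_one_mul_choose_eq (n + m) m
      simpa [Nat.succ_eq_add_one] using this
    calc n ^ (m + 1) = n * n ^ m := by ring
      _ ≤ n * (m.factorial * (n + m).choose m) := Nat.mul_le_mul_left n (ih n)
      _ ≤ (n + m + 1) * (m.factorial * (n + m).choose m) := by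
          apply Nat.mul_le_mul_right; omega
      _ = m.factorial * ((n + m + 1) * (n + m).choose m) := by ring
      _ = m.factorial * ((n + m + 1).choose (m + 1) * (m + 1)) := by rw [key]
      _ = (m + 1).factorial * (n + m + 1).choose (m + 1) := by
          rw [Nat.factorial_succ]; ring
      _ = (m + 1).factorial * (n + (m + 1)).choose (m + 1) := by
          congr 2

/-- tuples in `[0,n]^k` with sum `j` -/
def tup (n k j : ℕ) : Finset (Fin k → ℕ) :=
  (Fintype.piFinset fun _ : Fin k => Finset.range (n+1)).filter (fun x => ∑ i, x i = j)

lemma tup_card (n : ℕ) : ∀ k j, (tup n k j).card = cnt n k j := by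
  intro k
  induction k with
  | zero =>
    intro j
    rw [show cnt n 0 j = if j = 0 then 1 else 0 from rfl]
    split
    next h =>
      subst h
      rw [Finset.card_eq_one]
      refine ⟨default, ?_⟩
      ext x
      simp only [tup, Finset.mem_filter, Fintype.mem_piFinset, Finset.mem_singleton]
      constructor
      · intro _; exact Subsingleton.elim x default
      · intro h; subst h
        exact ⟨fun i => i.elim0, by simp⟩
    next h =>
      rw [Finset.card_eq_zero]
      ext x
      simp only [tup, Finset.mem_filter, Fintype.mem_piFinset, Finset.notMem_empty, iff_false,
        not_and]
      intro _
      simpa using fun hc => h hc.symm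
  | succ k ih =>
    intro j
    rw [Finset.card_eq_sum_card_fiberwise
      (f := fun x : Fin (k+1) → ℕ => x 0) (t := Finset.range (n+1))
      (by intro x hx
          simp only [Finset.mem_coe, tup, Finset.mem_filter, Fintype.mem_piFinset] at hx
          exact hx.1 0)]
    rw [cnt_succ]
    apply Finset.sum_congr rfl
    intro a ha
    simp only [Finset.mem_range] at ha
    by_cases haj : a ≤ j
    · rw [if_pos haj, ← ih (j - a)]
      apply Finset.card_nbij' (fun x => Fin.tail x) (fun y => Fin.cons a y)
      · intro x hx
        simp only [Finset.mem_coe, tup, Finset.mem_filter, Fintype.mem_piFinset, Finset.mem_range] at hx ⊢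
        obtain ⟨⟨h1, h2⟩, h3⟩ := hx
        refine ⟨fun i => h1 i.succ, ?_⟩
        rw [Fin.sum_univ_succ, h3] at h2
        show ∑ i : Fin k, x i.succ = j - a
        omega
      · intro y hy
        simp only [Finset.mem_coe, tup, Finset.mem_filter, Fintype.mem_piFinset, Finset.mem_range] at hy ⊢
        obtain ⟨h1, h2⟩ := hy
        refine ⟨⟨fun i => ?_, ?_⟩, ?_⟩
        · induction i using Fin.cases with
          | zero => simpa using ha
          | succ i => simpa using h1 i
        · rw [Fin.sum_univ_succ, Fin.cons_zero]
          simp only [Fin.cons_succ]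
          omega
        · simp
      · intro x hx
        simp only [Finset.mem_coe, tup, Finset.mem_filter] at hx
        rw [← hx.2]
        exact Fin.cons_self_tail x
      · intro y _
        simp
    · rw [if_neg haj]
      rw [Finset.card_eq_zero]
      ext x
      simp only [tup, Finset.mem_filter, Fintype.mem_piFinset, Finset.mem_range,
        Finset.notMem_empty, iff_false]
      rintro ⟨⟨h1, h2⟩, h3⟩
      apply haj
      rw [← h2, Fin.sum_univ_succ, h3]
      omega

lemma list_mem_image (n k j : ℕ) (l : List ℕ) (hlen : l.length = k)
    (hbd : ∀ x ∈ l, x ≤ n) (hsum : l.sum = j) :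
    (l : Multiset ℕ) ∈ (tup n k j).image (fun x => ((List.ofFn x : List ℕ) : Multiset ℕ)) := by
  subst hlen
  refine Finset.mem_image.mpr ⟨l.get, ?_, by rw [List.ofFn_get]⟩
  simp only [tup, Finset.mem_filter, Fintype.mem_piFinset, Finset.mem_range]
  constructor
  · intro i
    have := hbd (l.get i) (l.get_mem i)
    omega
  · rw [← List.sum_ofFn, List.ofFn_get]
    exact hsum

lemma set_eq_image (n k j : ℕ) :
    {m : Multiset ℕ | Multiset.card m = k ∧ (∀ x ∈ m, x ≤ n) ∧ m.sum = j}
      = ↑((tup n k j).image (fun x => ((List.ofFn x : List ℕ) : Multiset ℕ))) := by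
  ext m
  simp only [Set.mem_setOf_eq, Finset.coe_image, Set.mem_image, Finset.mem_coe]
  constructor
  · rintro ⟨hcard, hbd, hsum⟩
    have := list_mem_image n k j m.toList
      (by rw [Multiset.length_toList, hcard])
      (by intro x hx; exact hbd x (by rwa [← Multiset.mem_toList]))
      (by rw [Multiset.sum_toList]; exact hsum)
    rw [Multiset.coe_toList] at this
    exact Finset.mem_image.mp this |>.imp fun x ⟨h1, h2⟩ => ⟨h1, h2⟩
  · rintro ⟨x, hx, rfl⟩
    simp only [tup, Finset.mem_filter, Fintype.mem_piFinset, Finset.mem_range] at hx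
    refine ⟨?_, ?_, ?_⟩
    · rw [Multiset.coe_card, List.length_ofFn]
    · intro y hy
      rw [Multiset.mem_coe, List.mem_ofFn] at hy
      obtain ⟨i, rfl⟩ := hy
      have := hx.1 i
      omega
    · show (List.ofFn x).sum = j
      rw [List.sum_ofFn]
      exact hx.2

lemma tup_card_le (n k j : ℕ) :
    (tup n k j).card ≤ k.factorial *
      ((tup n k j).image (fun x => ((List.ofFn x : List ℕ) : Multiset ℕ))).card := by
  apply Finset.card_le_mul_card_image
  intro m hm
  simp only [Finset.mem_image] at hm
  obtain ⟨x0, hx0, rfl⟩ := hm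
  set l0 := (List.ofFn x0 : List ℕ) with hl0
  have hlen0 : l0.length = k := by rw [hl0]; exact List.length_ofFn
  calc ((tup n k j).filter fun x => ((List.ofFn x : List ℕ) : Multiset ℕ) = ↑l0).card
      ≤ l0.permutations.toFinset.card := by
        apply Finset.card_le_card_of_injOn (fun x => (List.ofFn x : List ℕ))
        · intro x hx
          simp only [Finset.mem_coe, Finset.mem_filter] at hx ⊢
          rw [List.mem_toFinset, List.mem_permutations]
          exact Multiset.coe_eq_coe.mp hx.2
        · intro x _ y _ hxy
          exact List.ofFn_injective hxy
    _ ≤ l0.permutations.length := l0.permutations.toFinset_card_le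
    _ = k.factorial := by rw [List.length_permutations, hlen0]

/-- For `k ≥ 2` there is `C = C(k)` such that for all sufficiently large `n` and all
`j` with `n+1 ≤ j ≤ (k−1)n`, the number of multisets of size `k` with elements in
`{0,...,n}` summing to `j` is at least `n^{k−1}/((k−1)!k!) − C n^{k−2}`. -/
theorem stmt_8 (k : ℕ) (hk : 2 ≤ k) :
    ∃ C : ℝ, 0 < C ∧ ∃ N : ℕ, ∀ n : ℕ, N ≤ n → ∀ j : ℕ, n + 1 ≤ j → j ≤ (k - 1) * n →
      (n : ℝ) ^ (k - 1) / ((Nat.factorial (k - 1)) * (Nat.factorial k))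
          - C * (n : ℝ) ^ (k - 2)
        ≤ (Nat.card {m : Multiset ℕ | Multiset.card m = k ∧ (∀ x ∈ m, x ≤ n) ∧ m.sum = j} : ℝ) := by
  refine ⟨1, one_pos, 0, ?_⟩
  intro n _ j hj1 hj2
  obtain ⟨m, rfl⟩ : ∃ m, k = m + 1 := ⟨k - 1, by omega⟩
  have hsum : n + j ≤ (m + 1) * n := by
    have h2 : (m + 1 - 1) * n = m * n := by simp
    rw [h2] at hj2
    have h3 : (m + 1) * n = m * n + n := by ring
    omega
  have hnat : n ^ m ≤ m.factorial * ((m+1).factorial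
      * Nat.card {mm : Multiset ℕ | Multiset.card mm = m + 1 ∧ (∀ x ∈ mm, x ≤ n) ∧ mm.sum = j}) := by
    calc n ^ m ≤ m.factorial * (n + m).choose m := pow_le_fact_mul_choose m n
      _ = m.factorial * cnt n (m+1) n := by rw [cnt_boundary n m n le_rfl]
      _ ≤ m.factorial * cnt n (m+1) j :=
          Nat.mul_le_mul_left _ (cnt_mono n (m+1) n j (by omega) hsum)
      _ = m.factorial * (tup n (m+1) j).card := by rw [tup_card]
      _ ≤ m.factorial * ((m+1).factorial
            * ((tup n (m+1) j).image (fun x => ((List.ofFn x : List ℕ) : Multiset ℕ))).card) :=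
          Nat.mul_le_mul_left _ (tup_card_le n (m+1) j)
      _ = _ := by
          congr 2
          rw [Nat.card_coe_set_eq, set_eq_image n (m+1) j, Set.ncard_coe_finset]
  have hfac1 : (0:ℝ) < (m.factorial : ℝ) * ((m+1).factorial : ℝ) := by
    positivity
  have hcast : ((n:ℝ)) ^ m ≤ ((m.factorial : ℝ) * ((m+1).factorial : ℝ))
      * (Nat.card {mm : Multiset ℕ | Multiset.card mm = m + 1 ∧ (∀ x ∈ mm, x ≤ n) ∧ mm.sum = j} : ℝ) := by
    have h2 := (Nat.cast_le (α := ℝ)).mpr hnat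
    push_cast at h2
    linarith
  have hdiv : ((n:ℝ)) ^ m / ((m.factorial : ℝ) * ((m+1).factorial : ℝ))
      ≤ (Nat.card {mm : Multiset ℕ | Multiset.card mm = m + 1 ∧ (∀ x ∈ mm, x ≤ n) ∧ mm.sum = j} : ℝ) := by
    rw [div_le_iff₀ hfac1]
    linarith [hcast]
  have e1 : m + 1 - 1 = m := by omega
  rw [e1]
  have hpow : (0:ℝ) ≤ 1 * (n:ℝ) ^ (m + 1 - 2) := by positivity
  linarith [hdiv]
end
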